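/- arXiv:0910.2875 — 3 statements merged into one kernel-verified Lean document; each statement's English description precedes it below -/
import Mathlib

section
/- Let (φ_{s,t}) be an evolution family in ℍ with common Denjoy–Wolff point ∞. The following are equivalent: (i) for every w ∈ ℍ and every s ≥ 0, |φ_{s,t}(w)| → +∞ as t → +∞; (ii) there exist w₀ ∈ ℍ and s₀ ≥ 0 such that |φ_{s₀,t}(w₀)| → +∞ as t → +∞. Moreover, when (i) holds, the convergence to ∞ is uniform on compact subsets: for every s ≥ 0, every compact K ⊂ ℍ and every M > 0 there exists T ≥ s such that |φ_{s,t}(w)| ≥ M for all w ∈ K and all t ≥ T. -/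
open Complex MeasureTheory Set Filter Topology
open ComplexConjugate Metric

/-- The right half-plane `ℍ = {w : Re w > 0}`. -/
def RHP : Set ℂ := {w : ℂ | 0 < w.re}

/-- An evolution family in the right half-plane with common Denjoy-Wolff point `∞`,
together with its associated (Herglotz) vector field `F`. -/
structure EvolutionFamilyRHP where
  φ : ℝ → ℝ → ℂ → ℂ
  F : ℂ → ℝ → ℂ
  mapsTo : ∀ ⦃s t : ℝ⦄, 0 ≤ s → s ≤ t → Set.MapsTo (φ s t) RHP RHP
  holo : ∀ ⦃s t : ℝ⦄, 0 ≤ s → s ≤ t → DifferentiableOn ℂ (φ s t) RHP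
  id_eq : ∀ ⦃s : ℝ⦄, 0 ≤ s → ∀ w ∈ RHP, φ s s w = w
  comp : ∀ ⦃s u t : ℝ⦄, 0 ≤ s → s ≤ u → u ≤ t → ∀ w ∈ RHP,
    φ s t w = φ u t (φ s u w)
  F_meas : ∀ w ∈ RHP, Measurable (F w)
  F_holo : ∀ t : ℝ, 0 ≤ t → DifferentiableOn ℂ (fun w => F w t) RHP
  F_re_nonneg : ∀ w ∈ RHP, ∀ t : ℝ, 0 ≤ t → 0 ≤ (F w t).re
  F_bound : ∀ K : Set ℂ, K ⊆ RHP → IsCompact K → ∀ T : ℝ, 0 < T →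
    ∃ k : ℝ → ℝ, (∀ t, 0 ≤ k t) ∧ MeasureTheory.IntegrableOn k (Set.Icc 0 T) ∧
      ∀ w ∈ K, ∀ᵐ t ∂(MeasureTheory.volume.restrict (Set.Icc (0:ℝ) T)),
        ‖F w t‖ ≤ k t
  integral_eq : ∀ ⦃s t : ℝ⦄, 0 ≤ s → s ≤ t → ∀ w ∈ RHP,
    φ s t w = w + ∫ ξ in s..t, F (φ s ξ w) ξ

/-!
By the Schwarz–Pick lemma every holomorphic self-map of `ℍ` contracts the pseudo-hyperbolic
distance `ρ(z, w) = |w - z| / |w + z̄|`, and `ρ(a, b) ≤ r` forces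
`(1 - r) |a| ≤ (1 + r) |b|`. Hence for fixed `s, t` the moduli `|φ_{s,t}(z)|` and
`|φ_{s,t}(w)|` are comparable up to a factor depending only on `ρ(z, w) < 1`, which is bounded
away from `1` on compact sets. Points starting at different times are compared at a common
later time through the composition law.
-/

lemma one_sub_ne_zero_of_mem_ball {ζ : ℂ} (hζ : ζ ∈ ball (0 : ℂ) 1) : 1 - ζ ≠ 0 := by
  rw [sub_ne_zero]
  rintro rfl
  simp at hζ

namespace RHP

lemma one_mem : (1 : ℂ) ∈ RHP := by simp [RHP]

lemma add_conj_ne_zero {a w : ℂ} (ha : a ∈ RHP) (hw : w ∈ RHP) : w + conj a ≠ 0 := by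
  intro h
  have hre := congrArg Complex.re h
  simp only [add_re, conj_re, zero_re] at hre
  exact (add_pos hw ha).ne' hre

lemma norm_sub_lt_norm_add_conj {a w : ℂ} (ha : a ∈ RHP) (hw : w ∈ RHP) :
    ‖w - a‖ < ‖w + conj a‖ := by
  have ha' : 0 < a.re := ha
  have hw' : 0 < w.re := hw
  rw [norm_def, norm_def]
  apply Real.sqrt_lt_sqrt (normSq_nonneg _)
  -- `|w + ā|² - |w - a|² = 4 Re w Re a`
  simp only [normSq_apply, sub_re, sub_im, add_re, add_im, conj_re, conj_im]
  nlinarith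

/-- The Möbius map `ℍ → 𝔻` sending `a` to `0`; its modulus is the pseudo-hyperbolic
distance from `a`. -/
noncomputable def toDisk (a w : ℂ) : ℂ := (w - a) / (w + conj a)

noncomputable def ofDisk (a ζ : ℂ) : ℂ := (a + conj a * ζ) / (1 - ζ)

lemma toDisk_mem_ball {a w : ℂ} (ha : a ∈ RHP) (hw : w ∈ RHP) :
    toDisk a w ∈ ball (0 : ℂ) 1 := by
  rw [mem_ball_zero_iff, toDisk, norm_div,
    div_lt_one (norm_pos_iff.mpr (add_conj_ne_zero ha hw))]
  exact norm_sub_lt_norm_add_conj ha hw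

lemma norm_toDisk_lt_one {a w : ℂ} (ha : a ∈ RHP) (hw : w ∈ RHP) : ‖toDisk a w‖ < 1 :=
  mem_ball_zero_iff.mp (toDisk_mem_ball ha hw)

lemma ofDisk_mem {a ζ : ℂ} (ha : a ∈ RHP) (hζ : ζ ∈ ball (0 : ℂ) 1) : ofDisk a ζ ∈ RHP := by
  have ha' : 0 < a.re := ha
  have hnormSq : ζ.re * ζ.re + ζ.im * ζ.im < 1 := by
    rw [← normSq_apply, normSq_eq_norm_sq]
    exact pow_lt_one₀ (norm_nonneg _) (mem_ball_zero_iff.mp hζ) two_ne_zero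
  show 0 < (ofDisk a ζ).re
  rw [ofDisk, div_re, ← add_div]
  refine div_pos ?_ (normSq_pos.mpr (one_sub_ne_zero_of_mem_ball hζ))
  -- `Re ((a + āζ)(1 - ζ̄)) = Re a · (1 - |ζ|²)`
  simp only [add_re, add_im, mul_re, mul_im, sub_re, sub_im, conj_re, conj_im, one_re, one_im]
  nlinarith [mul_pos ha' (sub_pos.mpr hnormSq)]

@[simp]
lemma toDisk_self (a : ℂ) : toDisk a a = 0 := by simp [toDisk]

@[simp]
lemma ofDisk_zero (a : ℂ) : ofDisk a 0 = a := by simp [ofDisk]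

lemma ofDisk_toDisk {a w : ℂ} (ha : a ∈ RHP) (hw : w ∈ RHP) : ofDisk a (toDisk a w) = w := by
  have hne := add_conj_ne_zero ha hw
  have hne' := one_sub_ne_zero_of_mem_ball (toDisk_mem_ball ha hw)
  rw [ofDisk, div_eq_iff hne']
  rw [toDisk] at hne' ⊢
  field_simp
  ring

lemma differentiableOn_toDisk {a : ℂ} (ha : a ∈ RHP) : DifferentiableOn ℂ (toDisk a) RHP :=
  (differentiableOn_id.sub_const a).div (differentiableOn_id.add_const _)
    fun _ hw => add_conj_ne_zero ha hw

lemma differentiableOn_ofDisk (a : ℂ) : DifferentiableOn ℂ (ofDisk a) (ball 0 1) :=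
  DifferentiableOn.div (by fun_prop) (by fun_prop) fun _ hζ => one_sub_ne_zero_of_mem_ball hζ

/-- The Schwarz–Pick lemma in `ℍ`. -/
lemma norm_toDisk_le_of_mapsTo {f : ℂ → ℂ} (hd : DifferentiableOn ℂ f RHP)
    (hm : MapsTo f RHP RHP) {z w : ℂ} (hz : z ∈ RHP) (hw : w ∈ RHP) :
    ‖toDisk (f z) (f w)‖ ≤ ‖toDisk z w‖ := by
  set g : ℂ → ℂ := toDisk (f z) ∘ f ∘ ofDisk z
  have hofDisk : MapsTo (ofDisk z) (ball 0 1) RHP := fun _ hζ => ofDisk_mem hz hζ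
  have hg_maps : MapsTo g (ball 0 1) (ball 0 1) := fun _ hζ =>
    toDisk_mem_ball (hm hz) (hm (hofDisk hζ))
  have hg_diff : DifferentiableOn ℂ g (ball 0 1) :=
    (differentiableOn_toDisk (hm hz)).comp (hd.comp (differentiableOn_ofDisk z) hofDisk)
      (hm.comp hofDisk)
  have hg_schwarz := Complex.norm_le_norm_of_mapsTo_ball hg_diff
    (hg_maps.mono_right ball_subset_closedBall) (by simp [g]) (norm_toDisk_lt_one hz hw)
  simpa [g, ofDisk_toDisk hz hw] using hg_schwarz

lemma div_mul_norm_le_of_norm_toDisk_le {a b : ℂ} {r : ℝ} (hab : b + conj a ≠ 0)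
    (h : ‖toDisk a b‖ ≤ r) : (1 - r) / (1 + r) * ‖a‖ ≤ ‖b‖ := by
  have hr : 0 ≤ r := (norm_nonneg _).trans h
  rw [toDisk, norm_div, div_le_iff₀ (norm_pos_iff.mpr hab)] at h
  have htri : ‖a‖ ≤ ‖b‖ + ‖b - a‖ := by
    simpa using norm_sub_le b (b - a)
  have hconj : ‖b + conj a‖ ≤ ‖b‖ + ‖a‖ := by
    simpa using norm_add_le b (conj a)
  rw [div_mul_eq_mul_div, div_le_iff₀ (by linarith)]
  nlinarith

lemma div_mul_norm_le_of_mapsTo {f : ℂ → ℂ} (hd : DifferentiableOn ℂ f RHP)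
    (hm : MapsTo f RHP RHP) {z w : ℂ} (hz : z ∈ RHP) (hw : w ∈ RHP) {r : ℝ}
    (h : ‖toDisk z w‖ ≤ r) : (1 - r) / (1 + r) * ‖f z‖ ≤ ‖f w‖ :=
  div_mul_norm_le_of_norm_toDisk_le (add_conj_ne_zero (hm hz) (hm hw))
    ((norm_toDisk_le_of_mapsTo hd hm hz hw).trans h)

lemma exists_mem_Ico_forall_norm_toDisk_le {a : ℂ} (ha : a ∈ RHP) {K : Set ℂ} (hK : K ⊆ RHP)
    (hKc : IsCompact K) : ∃ r ∈ Ico (0 : ℝ) 1, ∀ w ∈ K, ‖toDisk a w‖ ≤ r := by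
  rcases K.eq_empty_or_nonempty with rfl | hKne
  · exact ⟨0, ⟨le_rfl, one_pos⟩, by simp⟩
  obtain ⟨w₁, hw₁K, hmax⟩ :=
    hKc.exists_isMaxOn hKne ((differentiableOn_toDisk ha).continuousOn.mono hK).norm
  exact ⟨_, ⟨norm_nonneg _, norm_toDisk_lt_one ha (hK hw₁K)⟩, hmax⟩

end RHP

namespace EvolutionFamilyRHP

open RHP

variable (E : EvolutionFamilyRHP)

lemma tendsto_norm_of_tendsto_norm {w₀ w : ℂ} {s₀ s : ℝ} (hw₀ : w₀ ∈ RHP) (hs₀ : 0 ≤ s₀)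
    (htend : Tendsto (fun t => ‖E.φ s₀ t w₀‖) atTop atTop) (hw : w ∈ RHP) (hs : 0 ≤ s) :
    Tendsto (fun t => ‖E.φ s t w‖) atTop atTop := by
  set u := max s s₀
  have hsu : s ≤ u := le_max_left _ _
  have hs₀u : s₀ ≤ u := le_max_right _ _
  have hu : 0 ≤ u := hs.trans hsu
  set z := E.φ s₀ u w₀
  set z' := E.φ s u w
  have hz : z ∈ RHP := E.mapsTo hs₀ hs₀u hw₀
  have hz' : z' ∈ RHP := E.mapsTo hs hsu hw
  have hc : 0 < (1 - ‖toDisk z z'‖) / (1 + ‖toDisk z z'‖) := by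
    have := norm_toDisk_lt_one hz hz'
    exact div_pos (by linarith) (by positivity)
  have hz_tendsto : Tendsto (fun t => ‖E.φ u t z‖) atTop atTop :=
    htend.congr' <| (eventually_ge_atTop u).mono fun t ht => by
      rw [E.comp hs₀ hs₀u ht w₀ hw₀]
  refine tendsto_atTop_mono' _ ?_ (hz_tendsto.const_mul_atTop hc)
  filter_upwards [eventually_ge_atTop u] with t ht
  rw [E.comp hs hsu ht w hw]
  exact div_mul_norm_le_of_mapsTo (E.holo hu ht) (E.mapsTo hu ht) hz hz' le_rfl

lemma eventually_forall_le_norm {z : ℂ} {s : ℝ} (hz : z ∈ RHP) (hs : 0 ≤ s)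
    (htend : Tendsto (fun t => ‖E.φ s t z‖) atTop atTop) {K : Set ℂ} (hK : K ⊆ RHP)
    (hKc : IsCompact K) (M : ℝ) : ∀ᶠ t in atTop, ∀ w ∈ K, M ≤ ‖E.φ s t w‖ := by
  obtain ⟨r, ⟨hr0, hr1⟩, hr⟩ := exists_mem_Ico_forall_norm_toDisk_le hz hK hKc
  set c := (1 - r) / (1 + r)
  have hc : 0 < c := div_pos (by linarith) (by linarith)
  filter_upwards [tendsto_atTop.mp htend (M / c), eventually_ge_atTop s] with t hMt hst w hw
  calc M = c * (M / c) := by field_simp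
    _ ≤ c * ‖E.φ s t z‖ := by gcongr
    _ ≤ ‖E.φ s t w‖ :=
      div_mul_norm_le_of_mapsTo (E.holo hs hst) (E.mapsTo hs hst) hz (hK hw) (hr w hw)

end EvolutionFamilyRHP

/-- [Step I of the boundary Denjoy-Wolff theorem]  For an evolution family in `ℍ` with
common Denjoy-Wolff point `∞`: pointwise convergence to `∞` for all `(s,w)` is equivalent
to convergence to `∞` for a single `(s₀,w₀)`, and in that case the convergence to `∞` is
uniform on compact subsets of `ℍ`. -/
theorem evolutionFamilyRHP_tendsto_infty_iff (E : EvolutionFamilyRHP) :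
    ((∀ w ∈ RHP, ∀ s : ℝ, 0 ≤ s →
        Tendsto (fun t => ‖E.φ s t w‖) atTop atTop) ↔
      (∃ w₀ ∈ RHP, ∃ s₀ : ℝ, 0 ≤ s₀ ∧
        Tendsto (fun t => ‖E.φ s₀ t w₀‖) atTop atTop)) ∧
    ((∀ w ∈ RHP, ∀ s : ℝ, 0 ≤ s →
        Tendsto (fun t => ‖E.φ s t w‖) atTop atTop) →
      ∀ s : ℝ, 0 ≤ s → ∀ K : Set ℂ, K ⊆ RHP → IsCompact K → ∀ M : ℝ, 0 < M →
        ∃ T : ℝ, s ≤ T ∧ ∀ w ∈ K, ∀ t : ℝ, T ≤ t → M ≤ ‖E.φ s t w‖) := by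
  refine ⟨⟨fun h => ⟨1, RHP.one_mem, 0, le_rfl, h 1 RHP.one_mem 0 le_rfl⟩, ?_⟩, ?_⟩
  · rintro ⟨w₀, hw₀, s₀, hs₀, htend⟩ w hw s hs
    exact E.tendsto_norm_of_tendsto_norm hw₀ hs₀ htend hw hs
  · intro h s hs K hK hKc M _
    obtain ⟨T, hT⟩ := (E.eventually_forall_le_norm RHP.one_mem hs (h 1 RHP.one_mem s hs)
      hK hKc M).exists_forall_of_atTop
    exact ⟨max s T, le_max_left _ _, fun w hw t ht => hT t (le_of_max_le_right ht) w hw⟩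
end

section
/- Let (φ_{s,t}) be an evolution family in ℍ with common Denjoy–Wolff point ∞. The following are equivalent: (a) there exist s₀ ≥ 0 and w₀ ∈ ℍ such that sup{ Re φ_{s₀,t}(w₀) : t ≥ s₀ } < +∞; (b) for every s ≥ 0 and every w ∈ ℍ, sup{ Re φ_{s,t}(w) : t ≥ s } < +∞; (c) for every s ≥ 0 there exists a holomorphic map θ_s : ℍ → ℍ such that φ_{s,t} − i·Im φ_{s,t}(1) → θ_s uniformly on compact subsets of ℍ as t → +∞. -/
open Complex MeasureTheory Set Filter Topology

/-!
`Re φ_{s,t}(w)` increases with `t` because `Re F ≥ 0`. The rest is Harnack's inequality for a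
holomorphic map `f` of `ℍ` into its closure: if the pseudo-hyperbolic distance
`‖rhpToDisc a z‖ = |z - a| / |z + ā|` is at most `ρ < 1`, then `|f z - f a| ≤ 2ρ/(1-ρ) · Re f a`,
which follows from the Schwarz–Pick lemma applied to `f + δ`.
Applied to `φ_{t₀,t}` it makes the real parts of any two orbits comparable, whence (a) ⇒ (b).
Applied to the increments `φ_{t,t'} - id`, which have nonnegative real part, it bounds the increment
of `φ_{s,t} - i Im φ_{s,t}(1)` on a compact set by a constant times
`Re φ_{s,t'}(1) - Re φ_{s,t}(1)`; under (b) this tends to zero, so these maps are uniformly Cauchy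
on compacta, whence (c). Conversely their real parts are `Re φ_{s,t}`, so (c) ⇒ (b).
-/

open scoped ComplexConjugate

theorem IsCompact.exists_lt_forall_le_of_lt {X : Type*} [TopologicalSpace X] {K : Set X}
    (hK : IsCompact K) {g : X → ℝ} (hg : ContinuousOn g K) {c : ℝ} (hlt : ∀ x ∈ K, g x < c) :
    ∃ ρ < c, ∀ x ∈ K, g x ≤ ρ := by
  rcases K.eq_empty_or_nonempty with rfl | hne
  · exact ⟨c - 1, by linarith, by simp⟩
  · obtain ⟨x₀, hx₀, hmax⟩ := hK.exists_isMaxOn hne hg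
    exact ⟨g x₀, hlt x₀ hx₀, fun x hx => hmax hx⟩

theorem uniformCauchySeqOn_of_dist_le_of_tendsto {ι α β : Type*} [SemilatticeSup ι]
    [Nonempty ι] [PseudoMetricSpace β] {F : ι → α → β} {K : Set α} {b : ι → ℝ}
    (hb : Tendsto b atTop (𝓝 0))
    (h : ∀ᶠ n in atTop, ∀ m, n ≤ m → ∀ x ∈ K, dist (F m x) (F n x) ≤ b n) :
    UniformCauchySeqOn F atTop K := by
  refine Metric.uniformCauchySeqOn_iff.2 fun ε hε => ?_
  obtain ⟨N, hN⟩ := eventually_atTop.1 (h.and (hb.eventually (gt_mem_nhds (half_pos hε))))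
  obtain ⟨hdist, hbN⟩ := hN N le_rfl
  refine ⟨N, fun m hm n hn x hx => ?_⟩
  calc dist (F m x) (F n x) ≤ dist (F m x) (F N x) + dist (F n x) (F N x) :=
        dist_triangle_right _ _ _
    _ ≤ b N + b N := add_le_add (hdist m hm x hx) (hdist n hn x hx)
    _ < ε := by linarith

theorem mem_RHP {z : ℂ} : z ∈ RHP ↔ 0 < z.re := Iff.rfl

theorem isOpen_RHP : IsOpen RHP := isOpen_lt continuous_const continuous_re

theorem one_mem_RHP : (1 : ℂ) ∈ RHP := by simp [mem_RHP]

theorem norm_sub_lt_norm_add_conj {z w : ℂ} (hz : z ∈ RHP) (hw : w ∈ RHP) :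
    ‖z - w‖ < ‖z + conj w‖ := by
  have hsq : ‖z + conj w‖ ^ 2 = ‖z - w‖ ^ 2 + 4 * z.re * w.re := by
    simp only [Complex.sq_norm, normSq_apply, add_re, add_im, sub_re, sub_im, conj_re, conj_im]
    ring
  have hpos : 0 < 4 * z.re * w.re := by
    have := mem_RHP.1 hz; have := mem_RHP.1 hw; positivity
  exact lt_of_pow_lt_pow_left₀ 2 (norm_nonneg _) (by linarith)

theorem add_conj_ne_zero {z w : ℂ} (hz : z ∈ RHP) (hw : w ∈ RHP) : z + conj w ≠ 0 :=
  norm_pos_iff.1 ((norm_nonneg _).trans_lt (norm_sub_lt_norm_add_conj hz hw))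

noncomputable def rhpToDisc (a z : ℂ) : ℂ := (z - a) / (z + conj a)

noncomputable def discToRHP (a u : ℂ) : ℂ := (a + u * conj a) / (1 - u)

@[simp] theorem rhpToDisc_self (a : ℂ) : rhpToDisc a a = 0 := by simp [rhpToDisc]

@[simp] theorem discToRHP_zero (a : ℂ) : discToRHP a 0 = a := by simp [discToRHP]

theorem norm_rhpToDisc_lt_one {a z : ℂ} (ha : a ∈ RHP) (hz : z ∈ RHP) : ‖rhpToDisc a z‖ < 1 := by
  rw [rhpToDisc, norm_div, div_lt_one ((norm_pos_iff.2 (add_conj_ne_zero hz ha)))]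
  exact norm_sub_lt_norm_add_conj hz ha

theorem mapsTo_rhpToDisc {a : ℂ} (ha : a ∈ RHP) : MapsTo (rhpToDisc a) RHP (Metric.ball 0 1) :=
  fun _ hz => mem_ball_zero_iff.2 (norm_rhpToDisc_lt_one ha hz)

theorem differentiableOn_rhpToDisc {a : ℂ} (ha : a ∈ RHP) :
    DifferentiableOn ℂ (rhpToDisc a) RHP :=
  (differentiableOn_id.sub_const a).div (differentiableOn_id.add_const _)
    fun _ hz => add_conj_ne_zero hz ha

theorem one_sub_ne_zero_of_mem_ball_s3 {u : ℂ} (hu : u ∈ Metric.ball (0 : ℂ) 1) : 1 - u ≠ 0 := by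
  intro h
  obtain rfl : u = 1 := (sub_eq_zero.1 h).symm
  simp at hu

theorem mapsTo_discToRHP {a : ℂ} (ha : a ∈ RHP) : MapsTo (discToRHP a) (Metric.ball 0 1) RHP := by
  intro u hu
  have hden : 0 < normSq (1 - u) := normSq_pos.2 (one_sub_ne_zero_of_mem_ball_s3 hu)
  have hu2 : normSq u < 1 := by
    rw [← Complex.sq_norm]; have := mem_ball_zero_iff.1 hu; nlinarith [norm_nonneg u]
  have hre : (discToRHP a u).re = (1 - normSq u) * a.re / normSq (1 - u) := by
    simp only [discToRHP, div_re, normSq_apply, add_re, add_im, sub_re, sub_im, mul_re, mul_im,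
      conj_re, conj_im, one_re, one_im]
    ring
  rw [mem_RHP, hre]
  exact div_pos (mul_pos (by linarith) (mem_RHP.1 ha)) hden

theorem differentiableOn_discToRHP (a : ℂ) : DifferentiableOn ℂ (discToRHP a) (Metric.ball 0 1) :=
  ((differentiableOn_id.mul_const _).const_add a).div (differentiableOn_id.const_sub 1)
    fun _ hu => one_sub_ne_zero_of_mem_ball_s3 hu

theorem discToRHP_rhpToDisc {a z : ℂ} (ha : a ∈ RHP) (hz : z ∈ RHP) :
    discToRHP a (rhpToDisc a z) = z := by
  have hd := add_conj_ne_zero hz ha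
  have hden : 1 - (z - a) / (z + conj a) = (a + conj a) / (z + conj a) := by
    field_simp; ring
  have hnum : a + (z - a) / (z + conj a) * conj a = z * (a + conj a) / (z + conj a) := by
    field_simp; ring
  rw [discToRHP, rhpToDisc, hden, hnum, div_div_div_cancel_right₀ hd,
    mul_div_cancel_right₀ _ (add_conj_ne_zero ha ha)]

theorem norm_rhpToDisc_le_of_mapsTo {f : ℂ → ℂ} (hf : DifferentiableOn ℂ f RHP)
    (hm : MapsTo f RHP RHP) {a z : ℂ} (ha : a ∈ RHP) (hz : z ∈ RHP) :
    ‖rhpToDisc (f a) (f z)‖ ≤ ‖rhpToDisc a z‖ := by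
  have hmaps : MapsTo (f ∘ discToRHP a) (Metric.ball 0 1) RHP := hm.comp (mapsTo_discToRHP ha)
  have hschwarz := Complex.norm_le_norm_of_mapsTo_ball
    ((differentiableOn_rhpToDisc (hm ha)).comp
      (hf.comp (differentiableOn_discToRHP a) (mapsTo_discToRHP ha)) hmaps)
    (((mapsTo_rhpToDisc (hm ha)).comp hmaps).mono_right Metric.ball_subset_closedBall)
    (by simp) (norm_rhpToDisc_lt_one ha hz)
  simpa [discToRHP_rhpToDisc ha hz] using hschwarz

theorem one_sub_mul_norm_sub_le_of_mapsTo {f : ℂ → ℂ} (hf : DifferentiableOn ℂ f RHP)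
    (hm : MapsTo f RHP RHP) {a z : ℂ} (ha : a ∈ RHP) (hz : z ∈ RHP) :
    (1 - ‖rhpToDisc a z‖) * ‖f z - f a‖ ≤ 2 * ‖rhpToDisc a z‖ * (f a).re := by
  set ρ := ‖rhpToDisc a z‖
  have hfa : 0 < (f a).re := hm ha
  have hsum : f z + conj (f a) = (f z - f a) + ((2 * (f a).re : ℝ) : ℂ) := by
    linear_combination add_conj (f a)
  have hpick : ‖f z - f a‖ ≤ ρ * ‖f z + conj (f a)‖ := by
    rw [← div_le_iff₀ (norm_pos_iff.2 (add_conj_ne_zero (hm hz) (hm ha))), ← norm_div]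
    exact norm_rhpToDisc_le_of_mapsTo hf hm ha hz
  have htri : ‖f z + conj (f a)‖ ≤ ‖f z - f a‖ + 2 * (f a).re := by
    rw [hsum]
    refine (norm_add_le _ _).trans_eq ?_
    rw [norm_real, Real.norm_of_nonneg (by positivity)]
  nlinarith [norm_nonneg (rhpToDisc a z)]

theorem norm_sub_le_of_re_nonneg {f : ℂ → ℂ} (hf : DifferentiableOn ℂ f RHP)
    (hre : ∀ z ∈ RHP, 0 ≤ (f z).re) {a z : ℂ} (ha : a ∈ RHP) (hz : z ∈ RHP) {ρ : ℝ}
    (hρ : ‖rhpToDisc a z‖ ≤ ρ) (hρ1 : ρ < 1) :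
    ‖f z - f a‖ ≤ 2 * ρ / (1 - ρ) * (f a).re := by
  -- apply the estimate to the maps `f + δ` into `RHP` and let `δ → 0`
  have hshift : ∀ δ : ℝ, 0 < δ → (1 - ρ) * ‖f z - f a‖ ≤ 2 * ρ * ((f a).re + δ) := by
    intro δ hδ
    have hmaps : MapsTo (fun w => f w + δ) RHP RHP := fun w hw => by
      simpa [mem_RHP] using add_pos_of_nonneg_of_pos (hre w hw) hδ
    have := one_sub_mul_norm_sub_le_of_mapsTo (hf.add_const (δ : ℂ)) hmaps ha hz
    simp only [add_sub_add_right_eq_sub, add_re, ofReal_re] at this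
    nlinarith [norm_nonneg (f z - f a), norm_nonneg (rhpToDisc a z), hre a ha]
  have hlim : (1 - ρ) * ‖f z - f a‖ ≤ 2 * ρ * (f a).re := by
    have hcont : Tendsto (fun δ : ℝ => 2 * ρ * ((f a).re + δ)) (𝓝[>] 0)
        (𝓝 (2 * ρ * ((f a).re + 0))) :=
      ((continuous_const.mul (continuous_const.add continuous_id)).tendsto 0).mono_left
        nhdsWithin_le_nhds
    simpa using ge_of_tendsto hcont (eventually_nhdsWithin_of_forall hshift)
  rw [div_mul_eq_mul_div, le_div_iff₀ (sub_pos.2 hρ1)]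
  linarith

theorem exists_lt_one_forall_norm_rhpToDisc_le {K : Set ℂ} (hK : K ⊆ RHP) (hKc : IsCompact K)
    (a : ℂ) (ha : a ∈ RHP) : ∃ ρ < 1, ∀ z ∈ K, ‖rhpToDisc a z‖ ≤ ρ :=
  hKc.exists_lt_forall_le_of_lt
    ((differentiableOn_rhpToDisc ha).continuousOn.norm.mono hK)
    fun _ hz => norm_rhpToDisc_lt_one ha (hK hz)

namespace EvolutionFamilyRHP

variable (E : EvolutionFamilyRHP) {s t t' : ℝ} {w : ℂ}

theorem re_le_re_φ (hs : 0 ≤ s) (hst : s ≤ t) (hw : w ∈ RHP) : w.re ≤ (E.φ s t w).re := by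
  rw [E.integral_eq hs hst w hw, add_re, le_add_iff_nonneg_right]
  by_cases hint : IntervalIntegrable (fun ξ => E.F (E.φ s ξ w) ξ) volume s t
  · rw [← reCLM_apply, ← reCLM.intervalIntegral_comp_comm hint]
    exact intervalIntegral.integral_nonneg hst fun ξ hξ =>
      E.F_re_nonneg _ (E.mapsTo hs hξ.1 hw) ξ (hs.trans hξ.1)
  · simp [intervalIntegral.integral_undef hint]

theorem re_φ_le_re_φ (hs : 0 ≤ s) (hst : s ≤ t) (htt' : t ≤ t') (hw : w ∈ RHP) :
    (E.φ s t w).re ≤ (E.φ s t' w).re := by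
  rw [E.comp hs hst htt' w hw]
  exact E.re_le_re_φ (hs.trans hst) htt' (E.mapsTo hs hst hw)

def HasBddReOrbit (s : ℝ) (w : ℂ) : Prop := ∃ M : ℝ, ∀ t : ℝ, s ≤ t → (E.φ s t w).re ≤ M

theorem hasBddReOrbit_of_eventually_le (hs : 0 ≤ s) (hw : w ∈ RHP) {M : ℝ}
    (h : ∀ᶠ t in atTop, (E.φ s t w).re ≤ M) : E.HasBddReOrbit s w := by
  obtain ⟨T, hT⟩ := eventually_atTop.1 h
  exact ⟨M, fun t hst =>
    (E.re_φ_le_re_φ hs hst (le_max_left t T) hw).trans (hT _ (le_max_right t T))⟩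

theorem hasBddReOrbit_of_hasBddReOrbit {s₀ : ℝ} {w₀ : ℂ} (hs₀ : 0 ≤ s₀) (hw₀ : w₀ ∈ RHP)
    (h₀ : E.HasBddReOrbit s₀ w₀) (hs : 0 ≤ s) (hw : w ∈ RHP) : E.HasBddReOrbit s w := by
  obtain ⟨M, hM⟩ := h₀
  set t₀ := max s s₀
  have ht₀ : 0 ≤ t₀ := hs.trans (le_max_left s s₀)
  have hz := E.mapsTo hs (le_max_left s s₀) hw
  have hz₀ := E.mapsTo hs₀ (le_max_right s s₀) hw₀
  set ρ := ‖rhpToDisc (E.φ s₀ t₀ w₀) (E.φ s t₀ w)‖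
  have hρ1 : ρ < 1 := norm_rhpToDisc_lt_one hz₀ hz
  -- from time `t₀` on both orbits are images of two fixed points under the same map `φ t₀ t`
  refine E.hasBddReOrbit_of_eventually_le hs hw (M := (1 + 2 * ρ / (1 - ρ)) * M) ?_
  filter_upwards [eventually_ge_atTop t₀] with t ht
  have hharnack := norm_sub_le_of_re_nonneg (E.holo ht₀ ht)
    (fun x hx => (E.mapsTo ht₀ ht hx).le) hz₀ hz le_rfl hρ1
  rw [← E.comp hs (le_max_left s s₀) ht w hw, ← E.comp hs₀ (le_max_right s s₀) ht w₀ hw₀]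
    at hharnack
  have hC : 0 ≤ 2 * ρ / (1 - ρ) := div_nonneg (by positivity) (by linarith)
  calc (E.φ s t w).re
      = (E.φ s₀ t w₀).re + (E.φ s t w - E.φ s₀ t w₀).re := by rw [sub_re]; ring
    _ ≤ (E.φ s₀ t w₀).re + 2 * ρ / (1 - ρ) * (E.φ s₀ t w₀).re :=
        add_le_add_right ((re_le_norm _).trans hharnack) _
    _ = (1 + 2 * ρ / (1 - ρ)) * (E.φ s₀ t w₀).re := by ring
    _ ≤ (1 + 2 * ρ / (1 - ρ)) * M := by
        gcongr
        exact hM t ((le_max_right s s₀).trans ht)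

noncomputable def normalized (s t : ℝ) (w : ℂ) : ℂ := E.φ s t w - ((E.φ s t 1).im : ℂ) * I

@[simp] theorem re_normalized : (E.normalized s t w).re = (E.φ s t w).re := by
  simp [normalized]

theorem norm_normalized_sub_le (hs : 0 ≤ s) (hst : s ≤ t) (htt' : t ≤ t') (hw : w ∈ RHP)
    {ρ : ℝ} (hρ : ‖rhpToDisc 1 w‖ ≤ ρ) (hρ1 : ρ < 1) :
    ‖E.normalized s t' w - E.normalized s t w‖ ≤
      (2 * ρ / (1 - ρ) + 1) * ((E.φ s t' 1).re - (E.φ s t 1).re) := by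
  have ht : 0 ≤ t := hs.trans hst
  set z := E.φ s t w
  set z₁ := E.φ s t 1
  have hz₁ : z₁ ∈ RHP := E.mapsTo hs hst one_mem_RHP
  set h : ℂ → ℂ := fun x => E.φ t t' x - x
  have hre : ∀ x ∈ RHP, 0 ≤ (h x).re := fun x hx => sub_nonneg.2 (E.re_le_re_φ ht htt' hx)
  have hpick : ‖rhpToDisc z₁ z‖ ≤ ρ :=
    (norm_rhpToDisc_le_of_mapsTo (E.holo hs hst) (E.mapsTo hs hst) one_mem_RHP hw).trans hρ
  have hharnack := norm_sub_le_of_re_nonneg (f := h) ((E.holo ht htt').sub differentiableOn_id)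
    hre hz₁ (E.mapsTo hs hst hw) hpick hρ1
  have hinc : (h z₁).re = (E.φ s t' 1).re - (E.φ s t 1).re := by
    simp [h, z₁, E.comp hs hst htt' 1 one_mem_RHP]
  have hdiff : E.normalized s t' w - E.normalized s t w = (h z - h z₁) + ((h z₁).re : ℂ) := by
    rw [normalized, normalized, E.comp hs hst htt' w hw, E.comp hs hst htt' 1 one_mem_RHP]
    apply Complex.ext <;> simp [h] <;> ring
  calc ‖E.normalized s t' w - E.normalized s t w‖
      ≤ ‖h z - h z₁‖ + (h z₁).re := by
        rw [hdiff]
        exact (norm_add_le _ _).trans_eq (by rw [norm_real, Real.norm_of_nonneg (hre z₁ hz₁)])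
    _ ≤ 2 * ρ / (1 - ρ) * (h z₁).re + (h z₁).re := by gcongr
    _ = (2 * ρ / (1 - ρ) + 1) * ((E.φ s t' 1).re - (E.φ s t 1).re) := by rw [← hinc]; ring

theorem uniformCauchySeqOn_normalized (hs : 0 ≤ s) (h₁ : E.HasBddReOrbit s 1) {K : Set ℂ}
    (hK : K ⊆ RHP) (hKc : IsCompact K) : UniformCauchySeqOn (E.normalized s) atTop K := by
  obtain ⟨M, hM⟩ := h₁
  obtain ⟨ρ, hρ1, hρ⟩ := exists_lt_one_forall_norm_rhpToDisc_le hK hKc 1 one_mem_RHP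
  set r : ℝ → ℝ := fun t => (E.φ s (max s t) 1).re
  have hr : Monotone r := fun t t' htt' =>
    E.re_φ_le_re_φ hs (le_max_left _ _) (max_le_max le_rfl htt') one_mem_RHP
  set L := ⨆ t, r t
  have hrL : Tendsto r atTop (𝓝 L) :=
    tendsto_atTop_ciSup hr ⟨M, by rintro _ ⟨t, rfl⟩; exact hM _ (le_max_left _ _)⟩
  have hr_eq : ∀ t, s ≤ t → r t = (E.φ s t 1).re := fun t hst => by simp [r, max_eq_right hst]
  set C := 2 * ρ / (1 - ρ) + 1
  refine uniformCauchySeqOn_of_dist_le_of_tendsto (b := fun t => C * (L - r t)) ?_ ?_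
  · simpa using ((tendsto_const_nhds (x := L)).sub hrL).const_mul C
  · filter_upwards [eventually_ge_atTop s] with t hst t' htt' w hw
    have hC : 0 ≤ C := by
      have := (norm_nonneg _).trans (hρ w hw)
      have : 0 < 1 - ρ := by linarith
      positivity
    rw [dist_eq_norm]
    refine (E.norm_normalized_sub_le hs hst htt' (hK hw) (hρ w hw) hρ1).trans ?_
    rw [← hr_eq t hst, ← hr_eq t' (hst.trans htt')]
    gcongr
    exact hr.ge_of_tendsto hrL t'

theorem exists_tendstoUniformlyOn_normalized (hs : 0 ≤ s) (h₁ : E.HasBddReOrbit s 1) :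
    ∃ θ : ℂ → ℂ, DifferentiableOn ℂ θ RHP ∧ MapsTo θ RHP RHP ∧
      ∀ K ⊆ RHP, IsCompact K → TendstoUniformlyOn (E.normalized s) θ atTop K := by
  have hcauchy := fun K (hK : K ⊆ RHP) hKc => E.uniformCauchySeqOn_normalized hs h₁ hK hKc
  have hpt : ∀ w ∈ RHP, ∃ l, Tendsto (fun t => E.normalized s t w) atTop (𝓝 l) := fun w hw =>
    cauchySeq_tendsto_of_complete
      ((hcauchy {w} (singleton_subset_iff.2 hw) isCompact_singleton).cauchySeq rfl)
  choose! θ hθ using hpt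
  have hunif : ∀ K ⊆ RHP, IsCompact K → TendstoUniformlyOn (E.normalized s) θ atTop K :=
    fun K hK hKc => (hcauchy K hK hKc).tendstoUniformlyOn_of_tendsto fun w hw => hθ w (hK hw)
  refine ⟨θ, ?_, fun w hw => ?_, hunif⟩
  · refine ((tendstoLocallyUniformlyOn_iff_forall_isCompact isOpen_RHP).2 hunif).differentiableOn
      ?_ isOpen_RHP
    filter_upwards [eventually_ge_atTop s] with t hst
    exact (E.holo hs hst).sub_const _
  · have hre := (continuous_re.tendsto _).comp (hθ w hw)
    refine (mem_RHP.1 hw).trans_le (ge_of_tendsto hre ?_)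
    filter_upwards [eventually_ge_atTop s] with t hst
    simpa using E.re_le_re_φ hs hst hw

theorem hasBddReOrbit_of_tendsto_normalized (hs : 0 ≤ s) (hw : w ∈ RHP) {l : ℂ}
    (h : Tendsto (fun t => E.normalized s t w) atTop (𝓝 l)) : E.HasBddReOrbit s w := by
  refine E.hasBddReOrbit_of_eventually_le hs hw (M := l.re + 1) ?_
  filter_upwards [((continuous_re.tendsto l).comp h).eventually (gt_mem_nhds (lt_add_one l.re))]
    with t ht
  simpa using ht.le

end EvolutionFamilyRHP

/-- For an evolution family in `ℍ` with common Denjoy-Wolff point `∞`, the following are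
equivalent: (a) `sup_{t ≥ s₀} Re φ_{s₀,t}(w₀) < ∞` for some `s₀ ≥ 0, w₀ ∈ ℍ`;
(b) `sup_{t ≥ s} Re φ_{s,t}(w) < ∞` for all `s ≥ 0, w ∈ ℍ`;
(c) for every `s ≥ 0` there is a holomorphic `θ_s : ℍ → ℍ` with
`φ_{s,t} − i·Im φ_{s,t}(1) → θ_s` uniformly on compact subsets of `ℍ`. -/
theorem evolutionFamilyRHP_bounded_tfae (E : EvolutionFamilyRHP) :
    ((∃ s₀ : ℝ, 0 ≤ s₀ ∧ ∃ w₀ ∈ RHP, ∃ M : ℝ,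
        ∀ t : ℝ, s₀ ≤ t → (E.φ s₀ t w₀).re ≤ M) ↔
      (∀ s : ℝ, 0 ≤ s → ∀ w ∈ RHP, ∃ M : ℝ,
        ∀ t : ℝ, s ≤ t → (E.φ s t w).re ≤ M)) ∧
    ((∀ s : ℝ, 0 ≤ s → ∀ w ∈ RHP, ∃ M : ℝ,
        ∀ t : ℝ, s ≤ t → (E.φ s t w).re ≤ M) ↔
      (∀ s : ℝ, 0 ≤ s → ∃ θ : ℂ → ℂ,
        DifferentiableOn ℂ θ RHP ∧ Set.MapsTo θ RHP RHP ∧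
        ∀ K : Set ℂ, K ⊆ RHP → IsCompact K →
          TendstoUniformlyOn
            (fun t w => E.φ s t w - ((E.φ s t 1).im : ℂ) * Complex.I) θ atTop K)) := by
  refine ⟨⟨fun ⟨s₀, hs₀, w₀, hw₀, h₀⟩ s hs w hw => ?_, fun hb => ?_⟩,
    ⟨fun hb s hs => ?_, fun hc s hs w hw => ?_⟩⟩
  · exact E.hasBddReOrbit_of_hasBddReOrbit hs₀ hw₀ h₀ hs hw
  · exact ⟨0, le_rfl, 1, one_mem_RHP, hb 0 le_rfl 1 one_mem_RHP⟩
  · exact E.exists_tendstoUniformlyOn_normalized hs (hb s hs 1 one_mem_RHP)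
  · obtain ⟨θ, -, -, hθ⟩ := hc s hs
    exact E.hasBddReOrbit_of_tendsto_normalized hs hw
      ((hθ {w} (singleton_subset_iff.2 hw) isCompact_singleton).tendsto_at rfl)
end

section
/- Let (ψ_{s,t}) be a non-trivial evolution family in 𝔻 with common Denjoy–Wolff point 0, and let λ : [0,∞) → ℂ be an associated spectral function, i.e. λ is locally absolutely continuous, λ(0) = 0, Re λ(t) ≥ 0 for all t, t ↦ Re λ(t) is nondecreasing, and ψ_{s,t}'(0) = exp(λ(s) − λ(t)) for all 0 ≤ s ≤ t (derivative at 0). Set L := lim_{t→+∞} Re λ(t) ∈ [0, +∞]. Then the following are equivalent: (a) L = +∞; (b) for every s ≥ 0, ψ_{s,t} → 0 uniformly on compact subsets of 𝔻 as t → +∞; (c) there exists s ≥ 0 such that ψ_{s,t} → 0 uniformly on compact subsets of 𝔻 as t → +∞. -/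
open Complex MeasureTheory Set Filter Topology

/-- The open unit disk `𝔻`. -/
def UD : Set ℂ := {z : ℂ | ‖z‖ < 1}

/-- An evolution family in the unit disk with common Denjoy-Wolff point `0`, i.e. a
solution family of the radial Loewner-type equation `dz/dt = −z·p(z,t)` with `p` a
generalized Herglotz function. -/
structure EvolutionFamilyDisk0 where
  φ : ℝ → ℝ → ℂ → ℂ
  p : ℂ → ℝ → ℂ
  mapsTo : ∀ ⦃s t : ℝ⦄, 0 ≤ s → s ≤ t → Set.MapsTo (φ s t) UD UD
  holo : ∀ ⦃s t : ℝ⦄, 0 ≤ s → s ≤ t → DifferentiableOn ℂ (φ s t) UD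
  id_eq : ∀ ⦃s : ℝ⦄, 0 ≤ s → ∀ z ∈ UD, φ s s z = z
  comp : ∀ ⦃s u t : ℝ⦄, 0 ≤ s → s ≤ u → u ≤ t → ∀ z ∈ UD,
    φ s t z = φ u t (φ s u z)
  p_meas : ∀ z ∈ UD, Measurable (p z)
  p_holo : ∀ t : ℝ, 0 ≤ t → DifferentiableOn ℂ (fun z => p z t) UD
  p_re_nonneg : ∀ z ∈ UD, ∀ t : ℝ, 0 ≤ t → 0 ≤ (p z t).re
  G_bound : ∀ K : Set ℂ, K ⊆ UD → IsCompact K → ∀ T : ℝ, 0 < T →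
    ∃ k : ℝ → ℝ, (∀ t, 0 ≤ k t) ∧ MeasureTheory.IntegrableOn k (Set.Icc 0 T) ∧
      ∀ z ∈ K, ∀ᵐ t ∂(MeasureTheory.volume.restrict (Set.Icc (0:ℝ) T)),
        ‖z * p z t‖ ≤ k t
  integral_eq : ∀ ⦃s t : ℝ⦄, 0 ≤ s → s ≤ t → ∀ z ∈ UD,
    φ s t z = z - ∫ ξ in s..t, φ s ξ z * p (φ s ξ z) ξ

/-- The family is non-trivial if some `φ_{s,t}`, `s < t`, is not the identity of `𝔻`. -/
def EvolutionFamilyDisk0.Nontrivial (E : EvolutionFamilyDisk0) : Prop :=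
  ∃ s t : ℝ, 0 ≤ s ∧ s < t ∧ ∃ z ∈ UD, E.φ s t z ≠ z

/-- The ω-limit (in `ℂ`) of the trajectory `t ↦ ψ_{s,t}(z)`. -/
def omegaLimitDisk0 (E : EvolutionFamilyDisk0) (s : ℝ) (z : ℂ) : Set ℂ :=
  {q : ℂ | ∃ tn : ℕ → ℝ, Tendsto tn atTop atTop ∧
    Tendsto (fun n => E.φ s (tn n) z) atTop (𝓝 q)}

/-
Everything is governed by `|ψ_{s,t}'(0)| = exp (Re λ(s) - Re λ(t))`. If `ψ_{s,t} → 0` locally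
uniformly, then so do the derivatives (Weierstrass), hence `Re λ → ∞`. Conversely, if
`Re λ → ∞`, then for fixed `u` and large `t` the derivative `ψ_{u,t}'(0)` is small, and the
Schwarz–Pick inequality for `ψ_{u,t}(z)/z` shows that `ψ_{u,t}` contracts every disk
`|z| ≤ R < 1` by a fixed factor `q < 1`; writing `ψ_{s,t}` as a composition of such maps gives
geometric decay on compact sets.

That `0` is fixed by every `ψ_{s,t}` follows from the Loewner equation: `z p(z,t)` vanishes at `0`
and is Lipschitz near `0` with an integrable constant, so Gronwall's lemma forces the trajectory
of `0` to stay at `0`.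
-/

open Metric ComplexConjugate

namespace Complex

lemma norm_sub_div_one_sub_conj_mul_le_one {a z : ℂ} (ha : ‖a‖ ≤ 1) (hz : ‖z‖ ≤ 1) :
    ‖(z - a) / (1 - conj a * z)‖ ≤ 1 := by
  have key : normSq (1 - conj a * z) - normSq (z - a) = (1 - normSq a) * (1 - normSq z) := by
    simp only [normSq_apply, sub_re, sub_im, mul_re, mul_im, one_re, one_im, conj_re, conj_im]
    ring
  have ha' : normSq a ≤ 1 := by rw [← Complex.sq_norm]; nlinarith [norm_nonneg a]
  have hz' : normSq z ≤ 1 := by rw [← Complex.sq_norm]; nlinarith [norm_nonneg z]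
  rw [norm_div]
  refine div_le_one_of_le₀ ((sq_le_sq₀ (norm_nonneg _) (norm_nonneg _)).1 ?_) (norm_nonneg _)
  rw [Complex.sq_norm, Complex.sq_norm]
  nlinarith

/-- The Schwarz–Pick inequality at the origin. -/
lemma norm_mul_one_sub_le_of_mapsTo_closedBall {g : ℂ → ℂ}
    (hd : DifferentiableOn ℂ g (ball 0 1)) (hg : MapsTo g (ball 0 1) (closedBall 0 1))
    (h0 : ‖g 0‖ < 1) {w : ℂ} (hw : ‖w‖ < 1) :
    ‖g w‖ * (1 - ‖g 0‖ * ‖w‖) ≤ ‖g 0‖ + ‖w‖ := by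
  set a := g 0
  have hg1 : ∀ z ∈ ball (0 : ℂ) 1, ‖g z‖ ≤ 1 := fun z hz => mem_closedBall_zero_iff.1 (hg hz)
  have hden : ∀ z ∈ ball (0 : ℂ) 1, 1 - conj a * g z ≠ 0 := fun z hz h => by
    have : ‖conj a * g z‖ < 1 := by
      rw [norm_mul, RCLike.norm_conj]
      nlinarith [norm_nonneg a, norm_nonneg (g z), hg1 z hz]
    rw [← sub_eq_zero.1 h, norm_one] at this
    exact this.false
  set F : ℂ → ℂ := fun z => (g z - a) / (1 - conj a * g z)
  have hF : ‖F w‖ ≤ ‖w‖ := by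
    refine norm_le_norm_of_mapsTo_ball ?_ (fun z hz => ?_) (by simp [F, a]) hw
    · exact (hd.sub_const a).div ((differentiableOn_const 1).sub (hd.const_mul _)) hden
    · exact mem_closedBall_zero_iff.2 (norm_sub_div_one_sub_conj_mul_le_one h0.le (hg1 z hz))
  -- invert the Möbius map: `g w - a = F w * (1 - conj a * g w)`
  have hw' : w ∈ ball (0 : ℂ) 1 := mem_ball_zero_iff.2 hw
  have hsub : ‖g w - a‖ ≤ ‖w‖ * (1 + ‖a‖ * ‖g w‖) := by
    rw [← div_mul_cancel₀ (g w - a) (hden w hw'), norm_mul]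
    refine mul_le_mul hF ((norm_sub_le _ _).trans_eq ?_) (norm_nonneg _) (norm_nonneg _)
    rw [norm_one, norm_mul, RCLike.norm_conj]
  nlinarith [norm_sub_norm_le (g w) a]

lemma norm_mul_one_sub_le_of_mapsTo_ball {f : ℂ → ℂ}
    (hd : DifferentiableOn ℂ f (ball 0 1)) (hf : MapsTo f (ball 0 1) (ball 0 1)) (h0 : f 0 = 0)
    (hf' : ‖deriv f 0‖ < 1) {w : ℂ} (hw : ‖w‖ < 1) :
    ‖f w‖ * (1 - ‖deriv f 0‖ * ‖w‖) ≤ ‖w‖ * (‖deriv f 0‖ + ‖w‖) := by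
  have hg : MapsTo (dslope f 0) (ball 0 1) (closedBall 0 1) := fun z hz => by
    have := norm_dslope_le_div_of_mapsTo_ball hd
      (fun z hz => by simpa [h0] using (mem_ball_zero_iff.1 (hf hz)).le) hz
    simpa using this
  have h := norm_mul_one_sub_le_of_mapsTo_closedBall
    ((differentiableOn_dslope (ball_mem_nhds 0 one_pos)).2 hd) hg (by rwa [dslope_same]) hw
  rw [dslope_same] at h
  have hfw : ‖f w‖ = ‖w‖ * ‖dslope f 0 w‖ := by
    simpa [h0, norm_smul] using (congrArg norm (sub_smul_dslope f 0 w)).symm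
  rw [hfw, mul_assoc]
  exact mul_le_mul_of_nonneg_left h (norm_nonneg w)

lemma norm_le_mul_norm_of_norm_deriv_le {f : ℂ → ℂ}
    (hd : DifferentiableOn ℂ f (ball 0 1)) (hf : MapsTo f (ball 0 1) (ball 0 1)) (h0 : f 0 = 0)
    {δ R : ℝ} (hδ : ‖deriv f 0‖ ≤ δ) (hδ1 : δ < 1) (hR : R < 1) {w : ℂ} (hw : ‖w‖ ≤ R) :
    ‖f w‖ ≤ (δ + R) / (1 - δ * R) * ‖w‖ := by
  have h := norm_mul_one_sub_le_of_mapsTo_ball hd hf h0 (hδ.trans_lt hδ1) (hw.trans_lt hR)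
  have hδ0 : 0 ≤ δ := (norm_nonneg _).trans hδ
  have hR0 : 0 ≤ R := (norm_nonneg _).trans hw
  rw [div_mul_eq_mul_div, le_div_iff₀ (by nlinarith)]
  calc ‖f w‖ * (1 - δ * R) ≤ ‖f w‖ * (1 - ‖deriv f 0‖ * ‖w‖) := by
        gcongr
    _ ≤ ‖w‖ * (‖deriv f 0‖ + ‖w‖) := h
    _ ≤ (δ + R) * ‖w‖ := by nlinarith [norm_nonneg w]

end Complex

section Gronwall

variable {E : Type*} [NormedAddCommGroup E] [NormedSpace ℝ E] {v F : ℝ → E} {L : ℝ → ℝ}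

lemma exists_pos_forall_integral_lt {a b ε : ℝ} (hL : IntervalIntegrable L volume a b)
    (hε : 0 < ε) : ∃ δ > 0, ∀ x ∈ Icc a b, ∀ y ∈ Icc x b, y - x < δ → ∫ t in x..y, L t < ε := by
  have hG : ContinuousOn (fun x => ∫ t in a..x, L t) (Icc a b) :=
    (intervalIntegral.continuousOn_primitive_interval' hL left_mem_uIcc).mono Icc_subset_uIcc
  obtain ⟨δ, hδ, hGδ⟩ := Metric.uniformContinuousOn_iff.1
    (isCompact_Icc.uniformContinuousOn_of_continuous hG) ε hε
  refine ⟨δ, hδ, fun x hx y hy hxy => ?_⟩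
  have hy' : y ∈ Icc a b := ⟨hx.1.trans hy.1, hy.2⟩
  have hdist := hGδ y hy' x hx (by rwa [Real.dist_eq, abs_of_nonneg (sub_nonneg.2 hy.1)])
  rw [← intervalIntegral.integral_interval_sub_left (hL.mono_set ?_) (hL.mono_set ?_)]
  · exact (le_abs_self _).trans_lt hdist
  all_goals exact uIcc_subset_uIcc_left (Icc_subset_uIcc ‹_›)

lemma eqOn_zero_of_eq_integral_of_integral_lt_one {c d : ℝ} (hv : ContinuousOn v (Icc c d))
    (hL0 : 0 ≤ L) (hL : IntervalIntegrable L volume c d) (hL1 : ∫ t in c..d, L t < 1)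
    (hvF : ∀ τ ∈ Icc c d, v τ = ∫ t in c..τ, F t)
    (hFv : ∀ᵐ t, t ∈ Icc c d → ‖F t‖ ≤ L t * ‖v t‖) : EqOn v 0 (Icc c d) := by
  intro τ hτ
  have hcd : c ≤ d := hτ.1.trans hτ.2
  obtain ⟨σ, hσc, hσ⟩ := isCompact_Icc.exists_isMaxOn ⟨τ, hτ⟩ hv.norm
  set M := ‖v σ‖
  have hbound : ∀ y ∈ Icc c d, ‖v y‖ ≤ (∫ t in c..d, L t) * M := fun y hy => calc
    ‖v y‖ ≤ ∫ t in c..y, L t * M := by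
      rw [hvF y hy]
      refine intervalIntegral.norm_integral_le_of_norm_le hy.1 ?_
        ((hL.mono_set (uIcc_subset_uIcc_left (by rwa [uIcc_of_le hcd]))).mul_const M)
      filter_upwards [hFv] with t ht ht'
      have htcd : t ∈ Icc c d := ⟨ht'.1.le, ht'.2.trans hy.2⟩
      exact (ht htcd).trans (mul_le_mul_of_nonneg_left (hσ htcd) (hL0 t))
    _ = (∫ t in c..y, L t) * M := intervalIntegral.integral_mul_const M L
    _ ≤ (∫ t in c..d, L t) * M := by
      gcongr
      exact intervalIntegral.integral_mono_interval le_rfl hy.1 hy.2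
        (Eventually.of_forall hL0) hL
  have hM : M = 0 := by nlinarith [hbound σ hσc, norm_nonneg (v σ)]
  exact norm_le_zero_iff.1 (hM ▸ hσ hτ)

/-- Uniqueness in Gronwall's lemma, with an integrable rate `L`. -/
lemma eqOn_zero_of_eq_integral_of_norm_le_mul_norm {a b : ℝ}
    (hF : IntervalIntegrable F volume a b) (hL0 : 0 ≤ L) (hL : IntervalIntegrable L volume a b)
    (hvF : ∀ τ ∈ Icc a b, v τ = ∫ t in a..τ, F t)
    (hFv : ∀ᵐ t, t ∈ Icc a b → ‖F t‖ ≤ L t * ‖v t‖) : EqOn v 0 (Icc a b) := by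
  have hv : ContinuousOn v (Icc a b) :=
    ((intervalIntegral.continuousOn_primitive_interval' hF left_mem_uIcc).mono
      Icc_subset_uIcc).congr hvF
  obtain ⟨δ, hδ, hsmall⟩ := exists_pos_forall_integral_lt hL one_pos
  have key : ∀ n : ℕ, ∀ τ ∈ Icc a b, τ ≤ a + n * (δ / 2) → v τ = 0 := by
    intro n
    induction n with
    | zero =>
      intro τ hτ h
      rw [le_antisymm (by simpa using h) hτ.1, hvF a (left_mem_Icc.2 (hτ.1.trans hτ.2)),
        intervalIntegral.integral_same]
    | succ n ih =>
      intro τ hτ h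
      by_cases hτn : τ ≤ a + n * (δ / 2)
      · exact ih τ hτ hτn
      set c := a + n * (δ / 2) with hc_def
      have hcτ : c ≤ τ := (lt_of_not_ge hτn).le
      have hc : c ∈ Icc a b := ⟨le_add_of_nonneg_right (by positivity), hcτ.trans hτ.2⟩
      have hcτ_sub : Icc c τ ⊆ Icc a b := Icc_subset_Icc hc.1 hτ.2
      refine eqOn_zero_of_eq_integral_of_integral_lt_one (hv.mono hcτ_sub) hL0
        (hL.mono_set (uIcc_subset_uIcc (Icc_subset_uIcc hc) (Icc_subset_uIcc hτ)))
        (hsmall c hc τ ⟨hcτ, hτ.2⟩ (by push_cast at h; linarith [hc_def])) (fun y hy => ?_)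
        (hFv.mono fun t ht ht' => ht (hcτ_sub ht')) ⟨hcτ, le_rfl⟩
      have hy' : y ∈ Icc a b := hcτ_sub hy
      rw [← sub_zero (v y), ← ih c hc le_rfl, hvF y hy', hvF c hc,
        intervalIntegral.integral_interval_sub_left (hF.mono_set ?_) (hF.mono_set ?_)]
      all_goals exact uIcc_subset_uIcc_left (Icc_subset_uIcc ‹_›)
  intro τ hτ
  obtain ⟨n, hn⟩ := exists_nat_ge ((τ - a) / (δ / 2))
  exact key n τ hτ (by rw [div_le_iff₀ (by positivity)] at hn; linarith)

end Gronwall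

lemma ae_forall_norm_le_of_isSeparable {X α G : Type*} [TopologicalSpace X]
    [TopologicalSpace.PseudoMetrizableSpace X] [MeasurableSpace α] {μ : Measure α} [NormedAddCommGroup G]
    {f : X → α → G} {g : α → ℝ} {K : Set X} (hK : TopologicalSpace.IsSeparable K)
    (hf : ∀ᵐ a ∂μ, ContinuousOn (fun x => f x a) K) (h : ∀ x ∈ K, ∀ᵐ a ∂μ, ‖f x a‖ ≤ g a) :
    ∀ᵐ a ∂μ, ∀ x ∈ K, ‖f x a‖ ≤ g a := by
  obtain ⟨D, hDK, hD, hKD⟩ := hK.exists_countable_dense_subset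
  filter_upwards [hf, (ae_ball_iff hD).2 fun x hx => h x (hDK hx)] with a hfa hDa x hx
  exact ContinuousWithinAt.closure_le (hKD hx) ((hfa x hx).mono hDK).norm
    continuousWithinAt_const hDa

lemma tendsto_exp_const_sub_nhds_zero_iff {α : Type*} {l : Filter α} {f : α → ℝ} (c : ℝ) :
    Tendsto (fun x => Real.exp (c - f x)) l (𝓝 0) ↔ Tendsto f l atTop := by
  rw [Real.tendsto_exp_comp_nhds_zero, ← tendsto_neg_atBot_iff]
  refine ⟨fun h => ?_, fun h => ?_⟩
  · convert tendsto_atBot_add_const_left l (-c) h using 2; ring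
  · convert tendsto_atBot_add_const_left l c h using 2; ring

lemma UD_eq_ball : UD = ball 0 1 := by
  ext z
  simp [UD]

lemma zero_mem_UD : (0 : ℂ) ∈ UD := by simp [UD]

lemma isOpen_UD : IsOpen UD := UD_eq_ball ▸ isOpen_ball

namespace EvolutionFamilyDisk0

variable (E : EvolutionFamilyDisk0)

lemma exists_ae_norm_mul_p_le {r T : ℝ} (hr0 : 0 < r) (hr : r < 1) (hT : 0 < T) :
    ∃ L : ℝ → ℝ, 0 ≤ L ∧ IntegrableOn L (Icc 0 T) ∧
      ∀ᵐ ξ ∂volume.restrict (Icc 0 T), ∀ w ∈ ball (0 : ℂ) r, ‖w * E.p w ξ‖ ≤ L ξ * ‖w‖ := by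
  have hK : closedBall (0 : ℂ) r ⊆ UD := UD_eq_ball ▸ closedBall_subset_ball hr
  obtain ⟨k, hk0, hk, hkb⟩ := E.G_bound _ hK (isCompact_closedBall 0 r) T hT
  have hdiff : ∀ ξ ∈ Icc 0 T, DifferentiableOn ℂ (fun z => z * E.p z ξ) UD := fun ξ hξ =>
    differentiableOn_id.mul (E.p_holo ξ hξ.1)
  have hcont : ∀ᵐ ξ ∂volume.restrict (Icc 0 T),
      ContinuousOn (fun z => z * E.p z ξ) (closedBall 0 r) := by
    filter_upwards [ae_restrict_mem measurableSet_Icc] with ξ hξ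
    exact (hdiff ξ hξ).continuousOn.mono hK
  refine ⟨fun ξ => k ξ / r, fun ξ => div_nonneg (hk0 ξ) hr0.le, hk.div_const r, ?_⟩
  filter_upwards [ae_forall_norm_le_of_isSeparable (isCompact_closedBall 0 r).isSeparable
    hcont hkb, ae_restrict_mem measurableSet_Icc] with ξ hbound hξ w hw
  -- Schwarz's lemma for `z ↦ z * p z ξ`, which vanishes at `0`
  simpa using dist_le_div_mul_dist_of_mapsTo_ball
    ((hdiff ξ hξ).mono (UD_eq_ball ▸ ball_subset_ball hr.le))
    (fun z hz => by simpa using hbound z (ball_subset_closedBall hz)) hw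

lemma map_zero {s t : ℝ} (hs : 0 ≤ s) (hst : s ≤ t) : E.φ s t 0 = 0 := by
  set v : ℝ → ℂ := fun τ => E.φ s τ 0
  set F : ℝ → ℂ := fun ξ => -(v ξ * E.p (v ξ) ξ)
  have hvF : ∀ τ ∈ Icc s t, v τ = ∫ ξ in s..τ, F ξ := fun τ hτ => by
    simpa [F, intervalIntegral.integral_neg] using E.integral_eq hs hτ.1 0 zero_mem_UD
  by_cases hF : IntervalIntegrable F volume s t
  swap
  · simpa [intervalIntegral.integral_undef hF] using hvF t ⟨hst, le_rfl⟩
  have hv : ContinuousOn v (Icc s t) :=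
    ((intervalIntegral.continuousOn_primitive_interval' hF left_mem_uIcc).mono
      Icc_subset_uIcc).congr hvF
  obtain ⟨r, hr, hvr⟩ := exists_lt_subset_ball (isCompact_Icc.image_of_continuousOn hv).isClosed
    (image_subset_iff.2 fun τ hτ => UD_eq_ball ▸ E.mapsTo hs hτ.1 zero_mem_UD)
  have hr0 : 0 < r := nonempty_ball.1 ⟨_, hvr (mem_image_of_mem v (left_mem_Icc.2 hst))⟩
  obtain ⟨L, hL0, hL, hLv⟩ := E.exists_ae_norm_mul_p_le hr0 hr (T := t + 1) (by linarith)
  have hsub : Icc s t ⊆ Icc 0 (t + 1) := Icc_subset_Icc hs (by linarith)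
  refine eqOn_zero_of_eq_integral_of_norm_le_mul_norm hF hL0
    ((intervalIntegrable_iff_integrableOn_Icc_of_le hst).2 (hL.mono_set hsub)) hvF ?_
    ⟨hst, le_rfl⟩
  filter_upwards [ae_imp_of_ae_restrict (ae_restrict_of_ae_restrict_of_subset hsub hLv)]
    with ξ hξ hξst
  simpa [F] using hξ hξst (v ξ) (hvr (mem_image_of_mem v hξst))

lemma norm_apply_le {s t : ℝ} (hs : 0 ≤ s) (hst : s ≤ t) {z : ℂ} (hz : z ∈ UD) :
    ‖E.φ s t z‖ ≤ ‖z‖ := by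
  rw [UD_eq_ball] at hz
  refine Complex.norm_le_norm_of_mapsTo_ball (UD_eq_ball ▸ E.holo hs hst)
    (fun w hw => ball_subset_closedBall (UD_eq_ball ▸ E.mapsTo hs hst (UD_eq_ball ▸ hw)))
    (E.map_zero hs hst) (mem_ball_zero_iff.1 hz)

lemma norm_apply_le_of_norm_deriv_le {u t δ R : ℝ} (hu : 0 ≤ u) (hut : u ≤ t)
    (hδ : ‖deriv (E.φ u t) 0‖ ≤ δ) (hδ1 : δ < 1) (hR : R < 1) {w : ℂ} (hw : ‖w‖ ≤ R) :
    ‖E.φ u t w‖ ≤ (δ + R) / (1 - δ * R) * ‖w‖ := by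
  have hd := E.holo hu hut
  have hm := E.mapsTo hu hut
  rw [UD_eq_ball] at hd hm
  exact Complex.norm_le_mul_norm_of_norm_deriv_le hd hm (E.map_zero hu hut) hδ hδ1 hR hw

lemma eventually_norm_le_pow_mul {s δ R : ℝ} (hs : 0 ≤ s)
    (hδ : ∀ u, s ≤ u → ∀ᶠ t in atTop, ‖deriv (E.φ u t) 0‖ ≤ δ) (hδ0 : 0 ≤ δ) (hδ1 : δ < 1)
    (hR0 : 0 ≤ R) (hR1 : R < 1) (hq : (δ + R) / (1 - δ * R) ≤ 1) (n : ℕ) :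
    ∀ᶠ t in atTop, ∀ z : ℂ, ‖z‖ ≤ R → ‖E.φ s t z‖ ≤ ((δ + R) / (1 - δ * R)) ^ n * R := by
  set q := (δ + R) / (1 - δ * R)
  have hq0 : 0 ≤ q := div_nonneg (by positivity) (by nlinarith)
  have hUD : ∀ z : ℂ, ‖z‖ ≤ R → z ∈ UD := fun z hz => hz.trans_lt hR1
  induction n with
  | zero =>
    filter_upwards [eventually_ge_atTop s] with t hst z hz
    simpa using (E.norm_apply_le hs hst (hUD z hz)).trans hz
  | succ n ih =>
    obtain ⟨U, hU⟩ := eventually_atTop.1 (ih.and (eventually_ge_atTop s))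
    obtain ⟨hUR, hsU⟩ := hU U le_rfl
    filter_upwards [eventually_ge_atTop U, hδ U hsU] with t hUt hδt z hz
    have hw := hUR z hz
    rw [E.comp hs hsU hUt z (hUD z hz)]
    calc ‖E.φ U t (E.φ s U z)‖ ≤ q * ‖E.φ s U z‖ :=
          E.norm_apply_le_of_norm_deriv_le (hs.trans hsU) hUt hδt hδ1 hR1
            (hw.trans (mul_le_of_le_one_left hR0 (pow_le_one₀ hq0 hq)))
      _ ≤ q * (q ^ n * R) := by gcongr
      _ = q ^ (n + 1) * R := by ring

lemma tendstoLocallyUniformlyOn_zero {s : ℝ} (hs : 0 ≤ s)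
    (h : ∀ u, s ≤ u → Tendsto (fun t => ‖deriv (E.φ u t) 0‖) atTop (𝓝 0)) :
    TendstoLocallyUniformlyOn (fun t z => E.φ s t z) (fun _ => 0) atTop UD := by
  rw [tendstoLocallyUniformlyOn_iff_forall_isCompact isOpen_UD]
  intro K hKU hK
  obtain ⟨R, ⟨hR0, hR1⟩, hKR⟩ :=
    exists_pos_lt_subset_ball one_pos hK.isClosed (UD_eq_ball ▸ hKU)
  set δ := (1 - R) / 2 with hδ
  have hδ0 : 0 < δ := by positivity
  have hδR : δ + R < 1 - δ * R := by nlinarith [mul_pos hδ0 (sub_pos.2 hR1)]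
  have hq0 : 0 ≤ (δ + R) / (1 - δ * R) := div_nonneg (by positivity) (by linarith)
  have hq1 : (δ + R) / (1 - δ * R) < 1 := (div_lt_one (by linarith)).2 hδR
  have hdecay := E.eventually_norm_le_pow_mul hs
    (fun u hu => (h u hu).eventually (eventually_le_nhds hδ0)) hδ0.le (by linarith) hR0.le hR1
    hq1.le
  rw [Metric.tendstoUniformlyOn_iff]
  intro ε hε
  obtain ⟨n, hn⟩ := (((tendsto_pow_atTop_nhds_zero_of_lt_one hq0 hq1).mul_const R).eventually
    (gt_mem_nhds (by simpa using hε))).exists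
  filter_upwards [hdecay n] with t ht z hz
  rw [dist_zero_left]
  exact (ht z (mem_ball_zero_iff.1 (hKR hz)).le).trans_lt hn

end EvolutionFamilyDisk0

theorem spectral_function_tendsto_zero_iff_general (E : EvolutionFamilyDisk0) (Λ : ℝ → ℂ)
    (hspec : ∀ ⦃s t : ℝ⦄, 0 ≤ s → s ≤ t →
      deriv (E.φ s t) 0 = Complex.exp (Λ s - Λ t)) :
    (Tendsto (fun t => (Λ t).re) atTop atTop ↔
      (∀ s : ℝ, 0 ≤ s → ∀ K : Set ℂ, K ⊆ UD → IsCompact K →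
        TendstoUniformlyOn (fun t z => E.φ s t z) (fun _ => 0) atTop K)) ∧
    ((∀ s : ℝ, 0 ≤ s → ∀ K : Set ℂ, K ⊆ UD → IsCompact K →
        TendstoUniformlyOn (fun t z => E.φ s t z) (fun _ => 0) atTop K) ↔
      (∃ s : ℝ, 0 ≤ s ∧ ∀ K : Set ℂ, K ⊆ UD → IsCompact K →
        TendstoUniformlyOn (fun t z => E.φ s t z) (fun _ => 0) atTop K)) := by
  have hderiv : ∀ s, 0 ≤ s → (Tendsto (fun t => ‖deriv (E.φ s t) 0‖) atTop (𝓝 0) ↔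
      Tendsto (fun t => (Λ t).re) atTop atTop) := fun s hs => by
    rw [← tendsto_exp_const_sub_nhds_zero_iff (Λ s).re]
    refine tendsto_congr' (eventually_atTop.2 ⟨s, fun t hst => ?_⟩)
    simp only [hspec hs hst, Complex.norm_exp, Complex.sub_re]
  simp only [← tendstoLocallyUniformlyOn_iff_forall_isCompact isOpen_UD]
  have hab : Tendsto (fun t => (Λ t).re) atTop atTop → ∀ s, 0 ≤ s →
      TendstoLocallyUniformlyOn (fun t z => E.φ s t z) (fun _ => 0) atTop UD :=
    fun h s hs => E.tendstoLocallyUniformlyOn_zero hs fun u hu => (hderiv u (hs.trans hu)).2 h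
  have hca : (∃ s, 0 ≤ s ∧ TendstoLocallyUniformlyOn (fun t z => E.φ s t z) (fun _ => 0)
      atTop UD) → Tendsto (fun t => (Λ t).re) atTop atTop := by
    rintro ⟨s, hs, h⟩
    have h' := (h.deriv (eventually_atTop.2 ⟨s, fun t => E.holo hs⟩) isOpen_UD).tendsto_at
      zero_mem_UD
    exact (hderiv s hs).1 (by simpa using h'.norm)
  exact ⟨⟨hab, fun h => hca ⟨0, le_rfl, h 0 le_rfl⟩⟩,
    ⟨fun h => ⟨0, le_rfl, h 0 le_rfl⟩, fun h => hab (hca h)⟩⟩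

/-- For a non-trivial evolution family in `𝔻` with common Denjoy-Wolff point `0` and
associated spectral function `Λ` (locally absolutely continuous, `Λ(0)=0`, `Re Λ ≥ 0`
nondecreasing, `ψ_{s,t}'(0) = exp(Λ(s) − Λ(t))`), the following are equivalent:
(a) `Re Λ(t) → +∞`; (b) for every `s ≥ 0`, `ψ_{s,t} → 0` locally uniformly;
(c) for some `s ≥ 0`, `ψ_{s,t} → 0` locally uniformly. -/
theorem spectral_function_tendsto_zero_iff (E : EvolutionFamilyDisk0)
    (hE : E.Nontrivial) (Λ : ℝ → ℂ)
    (hΛ_ac : ∃ g : ℝ → ℂ, (∀ T : ℝ, 0 < T → MeasureTheory.IntegrableOn g (Set.Icc 0 T)) ∧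
      ∀ t : ℝ, 0 ≤ t → Λ t = ∫ ξ in (0:ℝ)..t, g ξ)
    (hΛ0 : Λ 0 = 0)
    (hΛre : ∀ t : ℝ, 0 ≤ t → 0 ≤ (Λ t).re)
    (hΛmono : MonotoneOn (fun t => (Λ t).re) (Set.Ici (0:ℝ)))
    (hspec : ∀ ⦃s t : ℝ⦄, 0 ≤ s → s ≤ t →
      deriv (E.φ s t) 0 = Complex.exp (Λ s - Λ t)) :
    (Tendsto (fun t => (Λ t).re) atTop atTop ↔
      (∀ s : ℝ, 0 ≤ s → ∀ K : Set ℂ, K ⊆ UD → IsCompact K →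
        TendstoUniformlyOn (fun t z => E.φ s t z) (fun _ => 0) atTop K)) ∧
    ((∀ s : ℝ, 0 ≤ s → ∀ K : Set ℂ, K ⊆ UD → IsCompact K →
        TendstoUniformlyOn (fun t z => E.φ s t z) (fun _ => 0) atTop K) ↔
      (∃ s : ℝ, 0 ≤ s ∧ ∀ K : Set ℂ, K ⊆ UD → IsCompact K →
        TendstoUniformlyOn (fun t z => E.φ s t z) (fun _ => 0) atTop K)) :=
  spectral_function_tendsto_zero_iff_general E Λ hspec
end
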